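/- arXiv:2107.10663 — 2 statements merged into one kernel-verified Lean document; each statement's English description precedes it below -/
import Mathlib

section
/- For matrices A₁,…,A_K with operator norms bounded by ρ₁,…,ρ_K and nonnegative weights p₁,…,p_K summing to 1, the difference Σᵢ pᵢ exp(-ητAᵢ) − exp(-ητ Σᵢ pᵢAᵢ) equals (η²τ²/2)(Σᵢ pᵢAᵢ² − (Σᵢ pᵢAᵢ)²) + E, where the remainder E has operator norm at most C·η³τ³ for a constant C depending only on the ρᵢ (for ητ ≤ 1). -/
/-!
Write `exp X = 1 + X + X²/2 + R(X)`, where the tail of the exponential series gives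
`‖R(X)‖ ≤ ‖X‖³ e^‖X‖`. Averaging with weights summing to one, the constant and linear terms of
`∑ pᵢ exp(cAᵢ)` and `exp(c ∑ pᵢAᵢ)` agree and their quadratic terms differ by exactly
`(c²/2)(∑ pᵢAᵢ² - (∑ pᵢAᵢ)²)`, so what is left is `∑ pᵢ R(cAᵢ) - R(c ∑ pᵢAᵢ)`. For `c = -ητ`
all these arguments lie in the ball of radius `ητ ∑ ρᵢ`, which bounds the remainder by
`2 (∑ ρᵢ)³ e^(∑ ρᵢ) (ητ)³` when `ητ ≤ 1`.
-/

open scoped BigOperators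
open NormedSpace

section ExpRemainder

open Finset Metric

variable {𝔸 : Type*} [NormedRing 𝔸] [NormedAlgebra ℝ 𝔸]

noncomputable def expRemainder (X : 𝔸) : 𝔸 := exp X - 1 - X - (2⁻¹ : ℝ) • X ^ 2

theorem exp_smul_eq_expRemainder_add (c : ℝ) (X : 𝔸) :
    exp (c • X) = expRemainder (c • X) + 1 + c • X + (c ^ 2 / 2) • X ^ 2 := by
  rw [expRemainder, smul_pow]; module

theorem sum_smul_exp_smul_sub_exp_smul_sum {ι : Type*} (s : Finset ι) (p : ι → ℝ)
    (hp : ∑ i ∈ s, p i = 1) (A : ι → 𝔸) (c : ℝ) :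
    ∑ i ∈ s, p i • exp (c • A i) - exp (c • ∑ i ∈ s, p i • A i)
        - (c ^ 2 / 2) • (∑ i ∈ s, p i • A i ^ 2 - (∑ i ∈ s, p i • A i) ^ 2)
      = ∑ i ∈ s, p i • expRemainder (c • A i) - expRemainder (c • ∑ i ∈ s, p i • A i) := by
  have havg : ∑ i ∈ s, p i • exp (c • A i) = ∑ i ∈ s, p i • expRemainder (c • A i) + 1
      + c • ∑ i ∈ s, p i • A i + (c ^ 2 / 2) • ∑ i ∈ s, p i • A i ^ 2 := by
    simp only [exp_smul_eq_expRemainder_add, smul_add, sum_add_distrib, ← sum_smul, hp, one_smul,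
      smul_sum, smul_comm (p _) c, smul_comm (p _) (c ^ 2 / 2)]
  rw [havg, exp_smul_eq_expRemainder_add]
  module

variable [CompleteSpace 𝔸]

-- `0 < N` because a normed ring may have `‖1‖ > 1`.
theorem norm_exp_sub_sum_range_le (X : 𝔸) {N : ℕ} (hN : 0 < N) :
    ‖exp X - ∑ n ∈ range N, (n.factorial⁻¹ : ℝ) • X ^ n‖ ≤ ‖X‖ ^ N * Real.exp ‖X‖ := by
  have htail : exp X - ∑ n ∈ range N, (n.factorial⁻¹ : ℝ) • X ^ n
      = ∑' n, ((n + N).factorial⁻¹ : ℝ) • X ^ (n + N) := by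
    rw [congrFun (exp_eq_tsum ℝ) X, ← (expSeries_summable' (𝕂 := ℝ) X).sum_add_tsum_nat_add N,
      add_sub_cancel_left]
  have hterm (n : ℕ) : ‖((n + N).factorial⁻¹ : ℝ) • X ^ (n + N)‖
      ≤ ‖X‖ ^ N * (‖X‖ ^ n / n.factorial) := by
    have hfac : (n.factorial : ℝ) ≤ (n + N).factorial := by
      exact_mod_cast Nat.factorial_le (Nat.le_add_right n N)
    calc ‖((n + N).factorial⁻¹ : ℝ) • X ^ (n + N)‖
        ≤ ((n + N).factorial⁻¹ : ℝ) * ‖X‖ ^ (n + N) := by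
          rw [norm_smul, Real.norm_of_nonneg (by positivity)]
          gcongr
          exact norm_pow_le' X (by omega)
      _ ≤ (n.factorial⁻¹ : ℝ) * ‖X‖ ^ (n + N) := by gcongr
      _ = ‖X‖ ^ N * (‖X‖ ^ n / n.factorial) := by ring
  rw [htail, Real.exp_eq_exp_ℝ, exp_eq_tsum_div, ← tsum_mul_left]
  exact tsum_of_norm_bounded
    ((Real.summable_pow_div_factorial ‖X‖).mul_left _).hasSum hterm

theorem norm_expRemainder_le {X : 𝔸} {r : ℝ} (hX : ‖X‖ ≤ r) :
    ‖expRemainder X‖ ≤ r ^ 3 * Real.exp r := by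
  calc ‖expRemainder X‖ = ‖exp X - ∑ n ∈ range 3, (n.factorial⁻¹ : ℝ) • X ^ n‖ := by
        simp [expRemainder, sum_range_succ, sub_sub, add_assoc]
    _ ≤ ‖X‖ ^ 3 * Real.exp ‖X‖ := norm_exp_sub_sum_range_le X (by norm_num)
    _ ≤ r ^ 3 * Real.exp r := by have := (norm_nonneg X).trans hX; gcongr

theorem norm_sum_smul_expRemainder_sub_le {ι : Type*} (s : Finset ι) {p : ι → ℝ}
    (hp₀ : ∀ i ∈ s, 0 ≤ p i) (hp : ∑ i ∈ s, p i = 1) {X : ι → 𝔸} {r : ℝ}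
    (hX : ∀ i ∈ s, ‖X i‖ ≤ r) :
    ‖∑ i ∈ s, p i • expRemainder (X i) - expRemainder (∑ i ∈ s, p i • X i)‖
      ≤ 2 * (r ^ 3 * Real.exp r) := by
  have havg : ‖∑ i ∈ s, p i • X i‖ ≤ r := mem_closedBall_zero_iff.1 <|
    (convex_closedBall 0 r).sum_mem hp₀ hp fun i hi ↦ mem_closedBall_zero_iff.2 (hX i hi)
  have hrem_avg : ‖∑ i ∈ s, p i • expRemainder (X i)‖ ≤ r ^ 3 * Real.exp r :=
    mem_closedBall_zero_iff.1 <| (convex_closedBall 0 _).sum_mem hp₀ hp fun i hi ↦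
      mem_closedBall_zero_iff.2 (norm_expRemainder_le (hX i hi))
  calc _ ≤ ‖∑ i ∈ s, p i • expRemainder (X i)‖ + ‖expRemainder (∑ i ∈ s, p i • X i)‖ :=
        norm_sub_le _ _
    _ ≤ r ^ 3 * Real.exp r + r ^ 3 * Real.exp r := add_le_add hrem_avg (norm_expRemainder_le havg)
    _ = 2 * (r ^ 3 * Real.exp r) := by ring

end ExpRemainder

open Finset in
/-- average of exponentials vs exponential of average, with an explicit
second-order variance term and a third-order remainder whose size depends only on the
norm bounds `ρᵢ` (for `ητ ≤ 1`). -/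
theorem avg_exp_sub_exp_avg
    {E : Type*} [NormedAddCommGroup E] [InnerProductSpace ℝ E] [FiniteDimensional ℝ E]
    (K : ℕ) (ρ : Fin K → ℝ) :
    ∃ C : ℝ, ∀ (A : Fin K → (E →L[ℝ] E)) (p : Fin K → ℝ) (η τ : ℝ),
      (∀ i, ‖A i‖ ≤ ρ i) → (∀ i, 0 ≤ p i) → (∑ i, p i = 1) →
      0 ≤ η → 0 ≤ τ → η * τ ≤ 1 →
      ‖(∑ i, p i • exp (-(η * τ) • A i)) - exp (-(η * τ) • ∑ i, p i • A i)
          - (η ^ 2 * τ ^ 2 / 2) • ((∑ i, p i • (A i) ^ 2) - (∑ i, p i • A i) ^ 2)‖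
        ≤ C * η ^ 3 * τ ^ 3 := by
  refine ⟨2 * ((∑ i, ρ i) ^ 3 * Real.exp (∑ i, ρ i)), fun A p η τ hA hp₀ hp hη hτ hητ ↦ ?_⟩
  have hρ₀ (i : Fin K) : 0 ≤ ρ i := (norm_nonneg _).trans (hA i)
  have hρ_sum : 0 ≤ ∑ i, ρ i := sum_nonneg fun i _ ↦ hρ₀ i
  have hητ₀ : 0 ≤ η * τ := mul_nonneg hη hτ
  have hA_le (i : Fin K) : ‖-(η * τ) • A i‖ ≤ η * τ * ∑ j, ρ j := by
    rw [norm_smul, norm_neg, Real.norm_of_nonneg hητ₀]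
    gcongr
    exact (hA i).trans (single_le_sum (fun j _ ↦ hρ₀ j) (mem_univ i))
  rw [show η ^ 2 * τ ^ 2 / 2 = (-(η * τ)) ^ 2 / 2 by ring,
    sum_smul_exp_smul_sub_exp_smul_sum univ p hp A, smul_sum]
  simp only [smul_comm (-(η * τ)) (p _)]
  calc _ ≤ 2 * ((η * τ * ∑ i, ρ i) ^ 3 * Real.exp (η * τ * ∑ i, ρ i)) :=
        norm_sum_smul_expRemainder_sub_le univ (fun i _ ↦ hp₀ i) hp fun i _ ↦ hA_le i
    _ ≤ 2 * ((η * τ * ∑ i, ρ i) ^ 3 * Real.exp (∑ i, ρ i)) := by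
        gcongr
        exact mul_le_of_le_one_left hρ_sum hητ
    _ = _ := by ring
end

section
/- Let U be a linear operator on a finite-dimensional inner product space V of the form U = (I + (τ²η²/2) B) exp(-ητKΠ), where Π is positive semidefinite and B commutes with the orthogonal projection onto ker(Π) and vanishes on ker(Π). If (1 + (τ²η²/2)‖B‖)·exp(-ητK λ_min⁺(Π)) < 1, where λ_min⁺(Π) is the smallest nonzero eigenvalue of Π, then for every f in the orthogonal complement of ker(Π), U^n f → 0 as n → ∞, while U f = f for every f ∈ ker(Π). -/
open NormedSpace Filter
open scoped RealInnerProductSpace Topology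

/-!
On `ker Π` the factor `exp (-ητKΠ)` is the identity and `B` vanishes, so `U` fixes `ker Π`.
Both factors preserve `(ker Π)ᗮ`, and in an orthonormal eigenbasis of `Π` every eigenvector
that is not orthogonal to a vector of `(ker Π)ᗮ` has eigenvalue at least `λ`, so
`‖exp (-ητKΠ) g‖ ≤ exp (-ητKλ) ‖g‖` there. Hence `U` contracts `(ker Π)ᗮ` by the factor
`(1 + (τ²η²/2)‖B‖) exp (-ητKλ) < 1`, and `Uⁿ f → 0` geometrically.
-/

namespace ContinuousLinearMap

section Normed

variable {E : Type*} [NormedAddCommGroup E]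

theorem exp_apply_of_apply_eq_smul [NormedSpace ℝ E] [CompleteSpace E] {A : E →L[ℝ] E} {v : E}
    {c : ℝ} (h : A v = c • v) : exp A v = Real.exp c • v := by
  have hpow : ∀ n : ℕ, (A ^ n) v = c ^ n • v := by
    intro n
    induction n with
    | zero => simp
    | succ n ih => rw [pow_succ', mul_apply_eq_comp, ih, map_smul, h, smul_smul, pow_succ]
  have hA := (exp_series_hasSum_exp' (𝕂 := ℝ) A).mapL (apply ℝ E v)
  have hc := (exp_series_hasSum_exp' (𝕂 := ℝ) c).smul_const v
  rw [← Real.exp_eq_exp_ℝ] at hc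
  refine hA.unique ?_
  simpa [hpow, smul_smul] using hc

theorem exp_neg_smul_apply_of_mem_ker [NormedSpace ℝ E] [CompleteSpace E] {T : E →L[ℝ] E}
    (s : ℝ) {g : E} (hg : g ∈ LinearMap.ker (T : E →ₗ[ℝ] E)) : exp (-s • T) g = g := by
  have hTg : (-s • T) g = (0 : ℝ) • g := by
    have hTg0 : T g = 0 := hg
    rw [smul_apply, hTg0, smul_zero, zero_smul]
  simpa using exp_apply_of_apply_eq_smul hTg

variable {𝕜 : Type*} [NontriviallyNormedField 𝕜] [NormedSpace 𝕜 E]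

theorem norm_one_add_smul_le (c : 𝕜) (B : E →L[𝕜] E) : ‖1 + c • B‖ ≤ 1 + ‖c‖ * ‖B‖ :=
  (norm_add_le _ _).trans (by rw [norm_smul]; gcongr; exact norm_id_le)

theorem tendsto_pow_apply_nhds_zero_of_norm_apply_le {U : E →L[𝕜] E} {W : Set E} {r : ℝ}
    (hW : ∀ g ∈ W, U g ∈ W) (hr₀ : 0 ≤ r) (hr₁ : r < 1) (hU : ∀ g ∈ W, ‖U g‖ ≤ r * ‖g‖)
    {g : E} (hg : g ∈ W) : Tendsto (fun n : ℕ => (U ^ n) g) atTop (𝓝 0) := by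
  have hpow : ∀ n : ℕ, (U ^ n) g ∈ W ∧ ‖(U ^ n) g‖ ≤ r ^ n * ‖g‖ := by
    intro n
    induction n with
    | zero => simpa using hg
    | succ n ih =>
      rw [pow_succ', mul_apply_eq_comp, pow_succ', mul_assoc]
      exact ⟨hW _ ih.1, (hU _ ih.1).trans (mul_le_mul_of_nonneg_left ih.2 hr₀)⟩
  rw [tendsto_zero_iff_norm_tendsto_zero]
  refine squeeze_zero (fun n => norm_nonneg _) (fun n => (hpow n).2) ?_
  simpa using (tendsto_pow_atTop_nhds_zero_of_lt_one hr₀ hr₁).mul_const ‖g‖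

end Normed

end ContinuousLinearMap

theorem OrthonormalBasis.norm_le_of_abs_inner_le {ι E : Type*} [Fintype ι] [NormedAddCommGroup E]
    [InnerProductSpace ℝ E] (b : OrthonormalBasis ι ℝ E) {x y : E} {r : ℝ} (hr : 0 ≤ r)
    (h : ∀ i, |⟪b i, x⟫| ≤ r * |⟪b i, y⟫|) : ‖x‖ ≤ r * ‖y‖ := by
  refine le_of_pow_le_pow_left₀ two_ne_zero (by positivity) ?_
  calc ‖x‖ ^ 2 = ∑ i, |⟪b i, x⟫| ^ 2 := by simp_rw [sq_abs, b.sum_sq_inner_right]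
    _ ≤ ∑ i, (r * |⟪b i, y⟫|) ^ 2 :=
      Finset.sum_le_sum fun i _ => pow_le_pow_left₀ (abs_nonneg _) (h i) 2
    _ = (r * ‖y‖) ^ 2 := by simp_rw [mul_pow, sq_abs, ← Finset.mul_sum, b.sum_sq_inner_right]

namespace LinearMap.IsSymmetric

variable {𝕜 E : Type*} [RCLike 𝕜] [NormedAddCommGroup E] [InnerProductSpace 𝕜 E]
  {T : E →ₗ[𝕜] E}

theorem mem_ker_orthogonal_of_apply_eq_smul (hT : T.IsSymmetric) {v : E} {μ : 𝕜}
    (hv : T v = μ • v) (hμ : μ ≠ 0) : v ∈ (LinearMap.ker T)ᗮ := by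
  refine (Submodule.mem_orthogonal' _ _).2 fun k hk => ?_
  have : (starRingEnd 𝕜) μ * inner 𝕜 v k = 0 := by
    rw [← inner_smul_left, ← hv, hT, LinearMap.mem_ker.mp hk, inner_zero_right]
  exact (mul_eq_zero.mp this).resolve_left (by simpa using hμ)

theorem apply_mem_orthogonal {W : Submodule 𝕜 E} (hT : T.IsSymmetric) (hW : ∀ w ∈ W, T w ∈ W)
    {v : E} (hv : v ∈ Wᗮ) : T v ∈ Wᗮ := by
  refine (Submodule.mem_orthogonal _ _).2 fun w hw => ?_
  rw [← hT]
  exact (Submodule.mem_orthogonal _ _).1 hv _ (hW w hw)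

end LinearMap.IsSymmetric

theorem LinearMap.IsSymmetric.le_of_apply_eq_smul_of_inner_ne_zero {E : Type*}
    [NormedAddCommGroup E] [InnerProductSpace ℝ E] {T : E →ₗ[ℝ] E} (hT : T.IsSymmetric)
    {lam : ℝ} (hlam : ∀ f ∈ (LinearMap.ker T)ᗮ, lam * ‖f‖ ^ 2 ≤ ⟪T f, f⟫)
    {v : E} {μ : ℝ} (hv : T v = μ • v) (hv_norm : ‖v‖ = 1) {g : E} (hg : g ∈ (LinearMap.ker T)ᗮ)
    (hvg : ⟪v, g⟫ ≠ 0) : lam ≤ μ := by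
  have hμ : μ ≠ 0 := by
    rintro rfl
    exact hvg ((Submodule.mem_orthogonal _ _).1 hg v (by simpa using hv))
  simpa [hv, real_inner_smul_left, hv_norm] using
    hlam v (hT.mem_ker_orthogonal_of_apply_eq_smul hv hμ)

namespace ContinuousLinearMap

variable {E : Type*} [NormedAddCommGroup E] [InnerProductSpace ℝ E]

theorem exp_neg_smul_apply_mem_ker_orthogonal [CompleteSpace E] {T : E →L[ℝ] E}
    (hT : IsSelfAdjoint T) (s : ℝ) {g : E} (hg : g ∈ (LinearMap.ker (T : E →ₗ[ℝ] E))ᗮ) :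
    exp (-s • T) g ∈ (LinearMap.ker (T : E →ₗ[ℝ] E))ᗮ :=
  ((IsSelfAdjoint.smul (star_trivial (-s)) hT).exp).isSymmetric.apply_mem_orthogonal
    (fun k hk => by rwa [coe_coe, exp_neg_smul_apply_of_mem_ker s hk]) hg

theorem norm_exp_neg_smul_apply_le [FiniteDimensional ℝ E] {T : E →L[ℝ] E}
    (hT : IsSelfAdjoint T) {s lam : ℝ} (hs : 0 ≤ s)
    (hlam : ∀ f ∈ (LinearMap.ker (T : E →ₗ[ℝ] E))ᗮ, lam * ‖f‖ ^ 2 ≤ ⟪T f, f⟫) {g : E}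
    (hg : g ∈ (LinearMap.ker (T : E →ₗ[ℝ] E))ᗮ) :
    ‖exp (-s • T) g‖ ≤ Real.exp (-(s * lam)) * ‖g‖ := by
  have hsymm := hT.isSymmetric
  set b := hsymm.eigenvectorBasis rfl
  set μ := hsymm.eigenvalues rfl
  have hb : ∀ i, T (b i) = μ i • b i := hsymm.apply_eigenvectorBasis rfl
  refine b.norm_le_of_abs_inner_le (Real.exp_pos _).le fun i => ?_
  have hcoef : ⟪b i, exp (-s • T) g⟫ = Real.exp (-(s * μ i)) * ⟪b i, g⟫ := by
    have hbi : (-s • T) (b i) = (-(s * μ i)) • b i := by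
      rw [smul_apply, hb, smul_smul, neg_mul]
    have hE := (IsSelfAdjoint.smul (star_trivial (-s)) hT).exp
    rw [show ⟪b i, exp (-s • T) g⟫ = ⟪exp (-s • T) (b i), g⟫ from (hE.isSymmetric _ _).symm,
      exp_apply_of_apply_eq_smul hbi, real_inner_smul_left]
  rw [hcoef, abs_mul, Real.abs_exp]
  by_cases hbg : ⟪b i, g⟫ = 0
  · simp [hbg]
  have hle := hsymm.le_of_apply_eq_smul_of_inner_ne_zero hlam (hb i) (b.orthonormal.1 i) hg hbg
  gcongr

end ContinuousLinearMap

theorem federated_update_contraction_general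
    {V : Type*} [NormedAddCommGroup V] [InnerProductSpace ℝ V] [FiniteDimensional ℝ V]
    (Pm B : V →L[ℝ] V) (η τ K lam : ℝ)
    (hη : 0 < η) (hτ : 0 < τ) (hK : 0 < K)
    (hPmsa : IsSelfAdjoint Pm)
    (hBker : ∀ f ∈ LinearMap.ker (Pm : V →ₗ[ℝ] V), B f = 0)
    (hBinv : ∀ f ∈ (LinearMap.ker (Pm : V →ₗ[ℝ] V))ᗮ, B f ∈ (LinearMap.ker (Pm : V →ₗ[ℝ] V))ᗮ)
    -- `lam` is a lower bound for `Π` away from its kernel (the smallest nonzero eigenvalue)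
    (hlam_min : ∀ f ∈ (LinearMap.ker (Pm : V →ₗ[ℝ] V))ᗮ, lam * ‖f‖ ^ 2 ≤ ⟪Pm f, f⟫)
    (hcontr : (1 + τ ^ 2 * η ^ 2 / 2 * ‖B‖) * Real.exp (-(η * τ * K * lam)) < 1) :
    (∀ f ∈ LinearMap.ker (Pm : V →ₗ[ℝ] V),
        (((1 + (τ ^ 2 * η ^ 2 / 2) • B) * exp (-(η * τ * K) • Pm) : V →L[ℝ] V)) f = f) ∧
    (∀ f ∈ (LinearMap.ker (Pm : V →ₗ[ℝ] V))ᗮ,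
        Tendsto (fun n : ℕ =>
          ((((1 + (τ ^ 2 * η ^ 2 / 2) • B) * exp (-(η * τ * K) • Pm) : V →L[ℝ] V)) ^ n) f)
          atTop (nhds 0)) := by
  set c := τ ^ 2 * η ^ 2 / 2
  set s := η * τ * K
  have hs : 0 ≤ s := by positivity
  have hU : ∀ g, ((1 + c • B) * exp (-s • Pm)) g = exp (-s • Pm) g + c • B (exp (-s • Pm) g) :=
    fun g => by simp
  refine ⟨fun f hf => ?_, fun f hf => ?_⟩
  · rw [hU, ContinuousLinearMap.exp_neg_smul_apply_of_mem_ker s hf, hBker f hf, smul_zero,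
      add_zero]
  refine ContinuousLinearMap.tendsto_pow_apply_nhds_zero_of_norm_apply_le (fun g hg => ?_)
    (by positivity) hcontr (fun g hg => ?_) hf
  · have hE := ContinuousLinearMap.exp_neg_smul_apply_mem_ker_orthogonal hPmsa s hg
    rw [hU]
    exact Submodule.add_mem _ hE (Submodule.smul_mem _ c (hBinv _ hE))
  · have hc : ‖c‖ = c := Real.norm_of_nonneg (by positivity)
    calc ‖(1 + c • B) (exp (-s • Pm) g)‖ ≤ ‖1 + c • B‖ * ‖exp (-s • Pm) g‖ :=
          ContinuousLinearMap.le_opNorm _ _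
      _ ≤ (1 + c * ‖B‖) * (Real.exp (-(s * lam)) * ‖g‖) := by
        gcongr
        · exact (ContinuousLinearMap.norm_one_add_smul_le c B).trans_eq (by rw [hc])
        · exact ContinuousLinearMap.norm_exp_neg_smul_apply_le hPmsa hs hlam_min hg
      _ = _ := by ring

/-- the federated update operator `U = (I + (τ²η²/2)B)·exp(-ητKΠ)` fixes the
kernel of `Π` and is asymptotically contracting on its orthogonal complement provided
`(1 + (τ²η²/2)‖B‖)·exp(-ητK λ_min⁺(Π)) < 1`. -/
theorem federated_update_contraction
    {V : Type*} [NormedAddCommGroup V] [InnerProductSpace ℝ V] [FiniteDimensional ℝ V]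
    (Pm B : V →L[ℝ] V) (η τ K lam : ℝ)
    (hη : 0 < η) (hτ : 0 < τ) (hK : 0 < K) (hlam : 0 < lam)
    (hPmsa : IsSelfAdjoint Pm) (hPmpsd : ∀ v : V, 0 ≤ ⟪Pm v, v⟫)
    (hBsa : IsSelfAdjoint B)
    (hBker : ∀ f ∈ LinearMap.ker (Pm : V →ₗ[ℝ] V), B f = 0)
    (hBinv : ∀ f ∈ (LinearMap.ker (Pm : V →ₗ[ℝ] V))ᗮ, B f ∈ (LinearMap.ker (Pm : V →ₗ[ℝ] V))ᗮ)
    -- `lam` is a lower bound for `Π` away from its kernel (the smallest nonzero eigenvalue)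
    (hlam_min : ∀ f ∈ (LinearMap.ker (Pm : V →ₗ[ℝ] V))ᗮ, lam * ‖f‖ ^ 2 ≤ ⟪Pm f, f⟫)
    (hcontr : (1 + τ ^ 2 * η ^ 2 / 2 * ‖B‖) * Real.exp (-(η * τ * K * lam)) < 1) :
    (∀ f ∈ LinearMap.ker (Pm : V →ₗ[ℝ] V),
        (((1 + (τ ^ 2 * η ^ 2 / 2) • B) * exp (-(η * τ * K) • Pm) : V →L[ℝ] V)) f = f) ∧
    (∀ f ∈ (LinearMap.ker (Pm : V →ₗ[ℝ] V))ᗮ,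
        Tendsto (fun n : ℕ =>
          ((((1 + (τ ^ 2 * η ^ 2 / 2) • B) * exp (-(η * τ * K) • Pm) : V →L[ℝ] V)) ^ n) f)
          atTop (nhds 0)) :=
  federated_update_contraction_general Pm B η τ K lam hη hτ hK hPmsa hBker hBinv hlam_min hcontr
end
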